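/- Let φ ∈ BMO(ℝ^n) with modulus M_δ(φ) = sup_{ℓ(Q)≤δ}(1/|Q|)∫_Q|φ - φ_Q|. Then for any y with |y| < δ, ‖φ_y - φ‖_* ≤ C(n) M_{2δ}(φ), where φ_y(x) = φ(x-y) and C(n) depends only on n. In particular, if φ ∈ VMO(ℝ^n), translations act continuously on φ in BMO norm. -/

import Mathlib

open MeasureTheory Real Set Filter

/-- Open axis-parallel cube with corner `c` and side length `l`. -/
def cube {n : ℕ} (c : EuclideanSpace ℝ (Fin n)) (l : ℝ) : Set (EuclideanSpace ℝ (Fin n)) :=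
  {x | ∀ i, x i ∈ Set.Ioo (c i) (c i + l)}

/-- Mean of `f` over the cube with corner `c` and side length `l`. -/
noncomputable def cubeAvg {n : ℕ} (f : EuclideanSpace ℝ (Fin n) → ℝ)
    (c : EuclideanSpace ℝ (Fin n)) (l : ℝ) : ℝ :=
  (∫ x in cube c l, f x) / l ^ n

/-- Mean oscillation of `f` over the cube with corner `c` and side length `l`. -/
noncomputable def cubeOsc {n : ℕ} (f : EuclideanSpace ℝ (Fin n) → ℝ)
    (c : EuclideanSpace ℝ (Fin n)) (l : ℝ) : ℝ :=
  (∫ x in cube c l, |f x - cubeAvg f c l|) / l ^ n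

/-- `f ∈ BMO(ℝⁿ)`. -/
def IsBMO {n : ℕ} (f : EuclideanSpace ℝ (Fin n) → ℝ) : Prop :=
  LocallyIntegrable f ∧ ∃ C, ∀ c l, 0 < l → cubeOsc f c l ≤ C

/-- `f ∈ VMO(ℝⁿ)`. -/
def IsVMO {n : ℕ} (f : EuclideanSpace ℝ (Fin n) → ℝ) : Prop :=
  IsBMO f ∧ ∀ ε > (0 : ℝ), ∃ δ > (0 : ℝ), ∀ c l, 0 < l → l ≤ δ → cubeOsc f c l ≤ ε

/-- The `BMO` seminorm `‖f‖_*`. -/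
noncomputable def bmoNorm {n : ℕ} (f : EuclideanSpace ℝ (Fin n) → ℝ) : ℝ :=
  sInf {C : ℝ | 0 ≤ C ∧ ∀ c l, 0 < l → cubeOsc f c l ≤ C}

/-!
On cubes of side at most `2δ`, the oscillation of `φ(· - y) - φ` is at most `2B`, the sum of the
oscillations of `φ` on two such cubes. Every cube of side `δ` and its translate by `y` lie in one
cube of side `2δ`, so `∫ |φ(· - y) - φ| ≤ 2 (2δ)ⁿ B` over every cube of side `δ`. Averaging this
over all cubes of side `δ` that meet a cube `Q` of side `l` (Fubini) gives
`∫_Q |φ(· - y) - φ| ≤ 2 B (2(l + δ))ⁿ`, which is `≤ 2 B (3l)ⁿ` once `l > 2δ`. As the oscillation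
is at most twice the mean deviation from any constant, every oscillation of `φ(· - y) - φ` is at
most `4 · 3ⁿ B`.
-/

open scoped ENNReal

lemma MeasureTheory.LocallyIntegrable.abs {X : Type*} [TopologicalSpace X] [MeasurableSpace X]
    {μ : Measure X} {f : X → ℝ} (hf : LocallyIntegrable f μ) :
    LocallyIntegrable (fun x => |f x|) μ :=
  fun x => (hf x).norm

lemma MeasureTheory.LocallyIntegrable.comp_sub_right {G : Type*} [AddGroup G] [TopologicalSpace G]
    [IsTopologicalAddGroup G] [LocallyCompactSpace G] [MeasurableSpace G] [MeasurableAdd G]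
    {μ : Measure G} [μ.IsAddRightInvariant] {f : G → ℝ} (hf : LocallyIntegrable f μ) (y : G) :
    LocallyIntegrable (fun x => f (x - y)) μ := by
  refine locallyIntegrable_iff.2 fun k hk => ?_
  exact (((measurePreserving_sub_right μ y).integrableOn_comp_preimage
    (measurableEmbedding_subRight y)).2
    (hf.integrableOn_isCompact (hk.image (continuous_sub_right y)))).mono_set
    (subset_preimage_image _ k)

lemma setIntegral_abs_sub_sub_le {α : Type*} [MeasurableSpace α] {μ : Measure α} {s : Set α}
    {f g : α → ℝ} (hf : IntegrableOn f s μ) (hg : IntegrableOn g s μ) (hs : μ s < ⊤) (a b : ℝ) :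
    ∫ x in s, |f x - g x - (a - b)| ∂μ ≤ (∫ x in s, |f x - a| ∂μ) + ∫ x in s, |g x - b| ∂μ := by
  have hconst : ∀ r : ℝ, IntegrableOn (fun _ => r) s μ := fun r => integrableOn_const hs.ne
  have hfa : IntegrableOn (fun x => |f x - a|) s μ := (hf.sub (hconst a)).abs
  have hgb : IntegrableOn (fun x => |g x - b|) s μ := (hg.sub (hconst b)).abs
  rw [← integral_add hfa hgb]
  refine integral_mono ((hf.sub hg).sub (hconst _)).abs (hfa.add hgb) fun x => ?_
  calc |f x - g x - (a - b)| = |(f x - a) - (g x - b)| := by rw [sub_sub_sub_comm]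
    _ ≤ |f x - a| + |g x - b| := abs_sub _ _

section

variable {n : ℕ}

lemma cube_eq_preimage_pi (c : EuclideanSpace ℝ (Fin n)) (l : ℝ) :
    cube c l = WithLp.ofLp ⁻¹' Set.univ.pi fun i => Ioo (c i) (c i + l) := by
  ext x; simp [cube]

lemma measurableSet_cube (c : EuclideanSpace ℝ (Fin n)) (l : ℝ) : MeasurableSet (cube c l) := by
  rw [cube_eq_preimage_pi]
  exact (MeasurableSet.univ_pi fun _ => measurableSet_Ioo).preimage (WithLp.measurable_ofLp _ _)

lemma volume_cube (c : EuclideanSpace ℝ (Fin n)) {l : ℝ} (hl : 0 ≤ l) :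
    volume (cube c l) = ENNReal.ofReal (l ^ n) := by
  rw [cube_eq_preimage_pi, (PiLp.volume_preserving_ofLp (Fin n)).measure_preimage
    (MeasurableSet.univ_pi fun _ => measurableSet_Ioo).nullMeasurableSet, volume_pi_pi]
  simp [Real.volume_Ioo, ENNReal.ofReal_pow hl]

lemma cube_subset_image_pi_Icc (c : EuclideanSpace ℝ (Fin n)) (l : ℝ) :
    cube c l ⊆ WithLp.toLp 2 '' Set.univ.pi fun i => Icc (c i) (c i + l) :=
  fun x hx => ⟨x.ofLp, fun i _ => Ioo_subset_Icc_self (hx i), rfl⟩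

lemma MeasureTheory.LocallyIntegrable.integrableOn_cube {f : EuclideanSpace ℝ (Fin n) → ℝ}
    (hf : LocallyIntegrable f) (c : EuclideanSpace ℝ (Fin n)) (l : ℝ) :
    IntegrableOn f (cube c l) :=
  (hf.integrableOn_isCompact ((isCompact_univ_pi fun _ => isCompact_Icc).image
    (PiLp.continuous_toLp 2 _))).mono_set (cube_subset_image_pi_Icc c l)

lemma mem_cube_iff_sub_mem {x c : EuclideanSpace ℝ (Fin n)} {l : ℝ} :
    x ∈ cube c l ↔ x - c ∈ cube 0 l := by
  simp [cube, sub_pos, sub_lt_iff_lt_add']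

lemma preimage_sub_right_cube (c y : EuclideanSpace ℝ (Fin n)) (l : ℝ) :
    (· - y) ⁻¹' cube (c - y) l = cube c l := by
  ext x
  simp only [mem_preimage, mem_cube_iff_sub_mem (c := c - y), mem_cube_iff_sub_mem (c := c),
    sub_sub_sub_cancel_right]

lemma setIntegral_cube_comp_sub_right (f : EuclideanSpace ℝ (Fin n) → ℝ)
    (c y : EuclideanSpace ℝ (Fin n)) (l : ℝ) :
    ∫ x in cube c l, f (x - y) = ∫ x in cube (c - y) l, f x := by
  rw [← preimage_sub_right_cube c y l]
  exact (measurePreserving_sub_right volume y).setIntegral_preimage_emb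
    (measurableEmbedding_subRight y) f _

lemma cubeOsc_comp_sub_right (f : EuclideanSpace ℝ (Fin n) → ℝ)
    (c y : EuclideanSpace ℝ (Fin n)) (l : ℝ) :
    cubeOsc (fun x => f (x - y)) c l = cubeOsc f (c - y) l := by
  have havg : cubeAvg (fun x => f (x - y)) c l = cubeAvg f (c - y) l := by
    rw [cubeAvg, cubeAvg, setIntegral_cube_comp_sub_right]
  rw [cubeOsc, cubeOsc, havg, setIntegral_cube_comp_sub_right (fun x => |f x - _|)]

lemma volume_cube_lt_top (c : EuclideanSpace ℝ (Fin n)) {l : ℝ} (hl : 0 ≤ l) :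
    volume (cube c l) < ⊤ := by
  rw [volume_cube c hl]
  exact ENNReal.ofReal_lt_top

lemma setIntegral_cube_const (c : EuclideanSpace ℝ (Fin n)) {l : ℝ} (hl : 0 ≤ l) (a : ℝ) :
    ∫ _ in cube c l, a = l ^ n * a := by
  rw [setIntegral_const, measureReal_def, volume_cube c hl, smul_eq_mul,
    ENNReal.toReal_ofReal (by positivity)]

lemma cubeOsc_nonneg (f : EuclideanSpace ℝ (Fin n) → ℝ) (c : EuclideanSpace ℝ (Fin n)) {l : ℝ}
    (hl : 0 ≤ l) : 0 ≤ cubeOsc f c l :=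
  div_nonneg (setIntegral_nonneg (measurableSet_cube c l) fun _ _ => abs_nonneg _)
    (pow_nonneg hl n)

lemma setIntegral_cube_abs_sub_cubeAvg {f : EuclideanSpace ℝ (Fin n) → ℝ}
    (c : EuclideanSpace ℝ (Fin n)) {l : ℝ} (hl : 0 < l) :
    ∫ x in cube c l, |f x - cubeAvg f c l| = l ^ n * cubeOsc f c l := by
  rw [cubeOsc, mul_div_cancel₀ _ (by positivity)]

lemma cubeOsc_sub_le {f g : EuclideanSpace ℝ (Fin n) → ℝ} {c : EuclideanSpace ℝ (Fin n)} {l : ℝ}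
    (hl : 0 < l) (hf : IntegrableOn f (cube c l)) (hg : IntegrableOn g (cube c l)) :
    cubeOsc (fun x => f x - g x) c l ≤ cubeOsc f c l + cubeOsc g c l := by
  have havg : cubeAvg (fun x => f x - g x) c l = cubeAvg f c l - cubeAvg g c l := by
    rw [cubeAvg, integral_sub hf hg, sub_div, cubeAvg, cubeAvg]
  rw [cubeOsc, havg, cubeOsc, cubeOsc, ← add_div]
  gcongr
  exact setIntegral_abs_sub_sub_le hf hg (volume_cube_lt_top c hl.le) _ _

lemma cubeOsc_le_two_mul {f : EuclideanSpace ℝ (Fin n) → ℝ} {c : EuclideanSpace ℝ (Fin n)} {l : ℝ}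
    (hl : 0 < l) (hf : IntegrableOn f (cube c l)) (a : ℝ) :
    cubeOsc f c l ≤ 2 * (∫ x in cube c l, |f x - a|) / l ^ n := by
  have hconst : ∀ r : ℝ, IntegrableOn (fun _ => r) (cube c l) := fun r =>
    integrableOn_const (volume_cube_lt_top c hl.le).ne
  have hfa : IntegrableOn (fun x => |f x - a|) (cube c l) := (hf.sub (hconst a)).abs
  have havg : l ^ n * |cubeAvg f c l - a| ≤ ∫ x in cube c l, |f x - a| := by
    have : l ^ n * (cubeAvg f c l - a) = ∫ x in cube c l, (f x - a) := by
      rw [integral_sub hf (hconst a), setIntegral_cube_const c hl.le, cubeAvg]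
      field_simp
    calc l ^ n * |cubeAvg f c l - a| = |∫ x in cube c l, (f x - a)| := by
          rw [← this, abs_mul, abs_of_pos (pow_pos hl n)]
      _ ≤ _ := abs_integral_le_integral_abs
  set m := cubeAvg f c l
  rw [cubeOsc, div_le_div_iff_of_pos_right (by positivity)]
  calc ∫ x in cube c l, |f x - m|
      ≤ ∫ x in cube c l, (|f x - a| + |m - a|) :=
        integral_mono (hf.sub (hconst m)).abs (hfa.add (hconst _))
          fun _ => abs_sub_le _ _ _ |>.trans_eq (by rw [abs_sub_comm a])
    _ = (∫ x in cube c l, |f x - a|) + l ^ n * |m - a| := by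
        rw [integral_add hfa (hconst _), setIntegral_cube_const c hl.le]
    _ ≤ 2 * ∫ x in cube c l, |f x - a| := by linarith

lemma cube_subset_cube {c w : EuclideanSpace ℝ (Fin n)} {l L : ℝ}
    (h : ∀ i, w i ≤ c i ∧ c i + l ≤ w i + L) : cube c l ⊆ cube w L :=
  fun _ hx i => ⟨(h i).1.trans_lt (hx i).1, (hx i).2.trans_le (h i).2⟩

lemma setIntegral_abs_sub_cubeAvg_le_of_subset {f : EuclideanSpace ℝ (Fin n) → ℝ}
    {w : EuclideanSpace ℝ (Fin n)} {L : ℝ} (hf : IntegrableOn f (cube w L)) (hL : 0 < L)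
    {s : Set (EuclideanSpace ℝ (Fin n))} (hs : s ⊆ cube w L) :
    ∫ x in s, |f x - cubeAvg f w L| ≤ L ^ n * cubeOsc f w L := by
  rw [← setIntegral_cube_abs_sub_cubeAvg w hL]
  exact setIntegral_mono_set
    (hf.sub (integrableOn_const (volume_cube_lt_top w hL.le).ne)).abs
    (.of_forall fun _ => abs_nonneg _) hs.eventuallyLE

lemma setIntegral_small_cube_abs_comp_sub_sub_le {φ : EuclideanSpace ℝ (Fin n) → ℝ}
    (hφ : LocallyIntegrable φ) {δ B : ℝ} (hδ : 0 < δ) {y : EuclideanSpace ℝ (Fin n)}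
    (hy : ‖y‖ < δ) (hB : ∀ w, cubeOsc φ w (2 * δ) ≤ B) (z : EuclideanSpace ℝ (Fin n)) :
    ∫ x in cube z δ, |φ (x - y) - φ x| ≤ 2 * (2 * δ) ^ n * B := by
  have hyi : ∀ i, |y i| < δ := fun i => (PiLp.norm_apply_le y i).trans_lt hy
  -- `cube z δ` and its translate `cube (z - y) δ` both lie in this cube of side `2δ`
  set w : EuclideanSpace ℝ (Fin n) := WithLp.toLp 2 fun i => z i - (y i + δ) / 2
  have hz : cube z δ ⊆ cube w (2 * δ) := cube_subset_cube fun i => by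
    have := abs_lt.1 (hyi i)
    simp only [w]
    constructor <;> linarith
  have hzy : cube (z - y) δ ⊆ cube w (2 * δ) := cube_subset_cube fun i => by
    have := abs_lt.1 (hyi i)
    simp only [w, PiLp.sub_apply]
    constructor <;> linarith
  have hw := hφ.integrableOn_cube w (2 * δ)
  have hQ : IntegrableOn φ (cube z δ) := hφ.integrableOn_cube z δ
  have hosc := mul_le_mul_of_nonneg_left (hB w) (by positivity : (0 : ℝ) ≤ (2 * δ) ^ n)
  set m := cubeAvg φ w (2 * δ)
  calc ∫ x in cube z δ, |φ (x - y) - φ x|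
      = ∫ x in cube z δ, |φ (x - y) - φ x - (m - m)| := by simp
    _ ≤ (∫ x in cube z δ, |φ (x - y) - m|) + ∫ x in cube z δ, |φ x - m| :=
        setIntegral_abs_sub_sub_le ((hφ.comp_sub_right y).integrableOn_cube z δ) hQ
          (volume_cube_lt_top z hδ.le) m m
    _ = (∫ x in cube (z - y) δ, |φ x - m|) + ∫ x in cube z δ, |φ x - m| := by
        rw [setIntegral_cube_comp_sub_right (fun x => |φ x - m|)]
    _ ≤ (2 * δ) ^ n * B + (2 * δ) ^ n * B := by
        gcongr
        · exact (setIntegral_abs_sub_cubeAvg_le_of_subset hw (by positivity) hzy).trans hosc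
        · exact (setIntegral_abs_sub_cubeAvg_le_of_subset hw (by positivity) hz).trans hosc
    _ = 2 * (2 * δ) ^ n * B := by ring

lemma volume_setOf_mem_cube (x : EuclideanSpace ℝ (Fin n)) {δ : ℝ} (hδ : 0 ≤ δ) :
    volume {z | x ∈ cube z δ} = ENNReal.ofReal (δ ^ n) := by
  have : {z | x ∈ cube z δ} = (x - ·) ⁻¹' cube 0 δ := by
    ext z
    exact mem_cube_iff_sub_mem
  rw [this, ← volume_cube 0 hδ]
  exact (Measure.measurePreserving_sub_left volume x).measure_preimage
    (measurableSet_cube 0 δ).nullMeasurableSet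

lemma cube_inter_cube_eq_empty_of_notMem {c z : EuclideanSpace ℝ (Fin n)} {l δ : ℝ}
    (hz : z ∉ cube (WithLp.toLp 2 fun i => c i - δ) (l + δ)) : cube z δ ∩ cube c l = ∅ := by
  refine eq_empty_of_forall_notMem fun x ⟨hxz, hxc⟩ => hz fun i => ?_
  have := hxz i
  have := hxc i
  simp only [mem_Ioo] at *
  constructor <;> linarith

lemma setLIntegral_cube_mul_le {G : EuclideanSpace ℝ (Fin n) → ℝ≥0∞}
    {c : EuclideanSpace ℝ (Fin n)} {l δ : ℝ} (hl : 0 ≤ l) (hδ : 0 ≤ δ)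
    (hG : AEMeasurable G (volume.restrict (cube c l))) {K : ℝ≥0∞}
    (hK : ∀ z, ∫⁻ x in cube z δ, G x ≤ K) :
    (∫⁻ x in cube c l, G x) * ENNReal.ofReal (δ ^ n) ≤ K * ENNReal.ofReal ((l + δ) ^ n) := by
  set Q' := cube (WithLp.toLp 2 fun i => c i - δ) (l + δ)
  have hS : MeasurableSet {p : EuclideanSpace ℝ (Fin n) × EuclideanSpace ℝ (Fin n) |
      p.1 ∈ cube p.2 δ} := by
    have : {p : EuclideanSpace ℝ (Fin n) × EuclideanSpace ℝ (Fin n) | p.1 ∈ cube p.2 δ} =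
        (fun p => p.1 - p.2) ⁻¹' cube 0 δ := by
      ext p
      exact mem_cube_iff_sub_mem
    rw [this]
    exact (measurableSet_cube 0 δ).preimage (measurable_fst.sub measurable_snd)
  have hF : AEMeasurable (fun p : EuclideanSpace ℝ (Fin n) × EuclideanSpace ℝ (Fin n) =>
      (cube p.2 δ).indicator G p.1) ((volume.restrict (cube c l)).prod volume) :=
    hG.comp_fst.indicator hS
  have hfiber : ∀ x, G x * ENNReal.ofReal (δ ^ n) = ∫⁻ z, (cube z δ).indicator G x := by
    intro x
    have hmeas : MeasurableSet {z | x ∈ cube z δ} := hS.preimage measurable_prodMk_left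
    rw [← volume_setOf_mem_cube x hδ, ← lintegral_indicator_const hmeas]
    rfl
  have hslice :
      ∀ z, ∫⁻ x in cube c l, (cube z δ).indicator G x ≤ Q'.indicator (fun _ => K) z := by
    intro z
    rw [lintegral_indicator (measurableSet_cube z δ),
      Measure.restrict_restrict (measurableSet_cube z δ)]
    by_cases hz : z ∈ Q'
    · rw [indicator_of_mem hz]
      exact (lintegral_mono_set inter_subset_left).trans (hK z)
    · rw [indicator_of_notMem hz, cube_inter_cube_eq_empty_of_notMem hz, Measure.restrict_empty,
        lintegral_zero_measure]
  calc (∫⁻ x in cube c l, G x) * ENNReal.ofReal (δ ^ n)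
      = ∫⁻ x in cube c l, ∫⁻ z, (cube z δ).indicator G x := by
        rw [← lintegral_mul_const'' _ hG]
        exact lintegral_congr fun x => hfiber x
    _ = ∫⁻ z, ∫⁻ x in cube c l, (cube z δ).indicator G x := lintegral_lintegral_swap hF
    _ ≤ ∫⁻ z, Q'.indicator (fun _ => K) z := lintegral_mono hslice
    _ = K * ENNReal.ofReal ((l + δ) ^ n) := by
        rw [lintegral_indicator_const (measurableSet_cube _ _), volume_cube _ (by positivity)]

lemma setIntegral_cube_mul_le {g : EuclideanSpace ℝ (Fin n) → ℝ} (hg : LocallyIntegrable g)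
    (hg0 : 0 ≤ g) {c : EuclideanSpace ℝ (Fin n)} {l δ K : ℝ} (hl : 0 ≤ l) (hδ : 0 ≤ δ)
    (hK : ∀ z, ∫ x in cube z δ, g x ≤ K) :
    (∫ x in cube c l, g x) * δ ^ n ≤ K * (l + δ) ^ n := by
  have hK0 : 0 ≤ K :=
    (setIntegral_nonneg (measurableSet_cube 0 δ) fun x _ => hg0 x).trans (hK 0)
  have hlint : ∀ z L, ∫⁻ x in cube z L, ENNReal.ofReal (g x) =
      ENNReal.ofReal (∫ x in cube z L, g x) := fun z L =>
    (ofReal_integral_eq_lintegral_ofReal (hg.integrableOn_cube z L) (.of_forall hg0)).symm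
  have hQ0 : 0 ≤ ∫ x in cube c l, g x :=
    setIntegral_nonneg (measurableSet_cube c l) fun x _ => hg0 x
  rw [← ENNReal.ofReal_le_ofReal_iff (by positivity), ENNReal.ofReal_mul (by positivity),
    ENNReal.ofReal_mul hK0, ← hlint]
  exact setLIntegral_cube_mul_le hl hδ (hg.integrableOn_cube c l).aemeasurable.ennreal_ofReal
    fun z => (hlint z δ).trans_le (ENNReal.ofReal_le_ofReal (hK z))

lemma setIntegral_cube_abs_comp_sub_sub_le {φ : EuclideanSpace ℝ (Fin n) → ℝ}
    (hφ : LocallyIntegrable φ) {δ B : ℝ} (hδ : 0 < δ) {y : EuclideanSpace ℝ (Fin n)}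
    (hy : ‖y‖ < δ) (hB : ∀ w, cubeOsc φ w (2 * δ) ≤ B) (c : EuclideanSpace ℝ (Fin n)) {l : ℝ}
    (hl : 0 ≤ l) :
    ∫ x in cube c l, |φ (x - y) - φ x| ≤ 2 * B * (2 * (l + δ)) ^ n := by
  have h := setIntegral_cube_mul_le (((hφ.comp_sub_right y).sub hφ).abs)
    (fun x => abs_nonneg _) (c := c) hl hδ.le
    (setIntegral_small_cube_abs_comp_sub_sub_le hφ hδ hy hB)
  exact le_of_mul_le_mul_right (h.trans_eq (by rw [mul_pow, mul_pow]; ring)) (pow_pos hδ n)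

lemma cubeOsc_comp_sub_sub_le {φ : EuclideanSpace ℝ (Fin n) → ℝ} (hφ : LocallyIntegrable φ)
    {δ B : ℝ} (hδ : 0 < δ) {y : EuclideanSpace ℝ (Fin n)} (hy : ‖y‖ < δ)
    (hB : ∀ c l, 0 < l → l ≤ 2 * δ → cubeOsc φ c l ≤ B) (c : EuclideanSpace ℝ (Fin n)) {l : ℝ}
    (hl : 0 < l) :
    cubeOsc (fun x => φ (x - y) - φ x) c l ≤ 4 * 3 ^ n * B := by
  have hB0 : 0 ≤ B := (cubeOsc_nonneg φ 0 hδ.le).trans (hB 0 δ hδ (by linarith))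
  have h3n : (1 : ℝ) ≤ 3 ^ n := one_le_pow₀ (by norm_num)
  rcases le_or_gt l (2 * δ) with hsmall | hlarge
  · calc cubeOsc (fun x => φ (x - y) - φ x) c l
        ≤ cubeOsc (fun x => φ (x - y)) c l + cubeOsc φ c l :=
          cubeOsc_sub_le hl ((hφ.comp_sub_right y).integrableOn_cube c l)
            (hφ.integrableOn_cube c l)
      _ ≤ B + B := by
          rw [cubeOsc_comp_sub_right]
          exact add_le_add (hB _ l hl hsmall) (hB c l hl hsmall)
      _ ≤ 4 * 3 ^ n * B := by nlinarith
  · have hratio : 2 * (l + δ) ≤ 3 * l := by linarith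
    calc cubeOsc (fun x => φ (x - y) - φ x) c l
        ≤ 2 * (∫ x in cube c l, |φ (x - y) - φ x - 0|) / l ^ n :=
          cubeOsc_le_two_mul hl (((hφ.comp_sub_right y).sub hφ).integrableOn_cube c l) 0
      _ ≤ 2 * (2 * B * (2 * (l + δ)) ^ n) / l ^ n := by
          simp only [sub_zero]
          gcongr
          exact setIntegral_cube_abs_comp_sub_sub_le hφ hδ hy
            (fun w => hB w _ (by linarith) le_rfl) c hl.le
      _ ≤ 2 * (2 * B * (3 * l) ^ n) / l ^ n := by gcongr
      _ = 4 * 3 ^ n * B := by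
          rw [mul_pow]
          field_simp
          ring

lemma bmoNorm_nonneg (f : EuclideanSpace ℝ (Fin n) → ℝ) : 0 ≤ bmoNorm f :=
  Real.sInf_nonneg fun _ hC => hC.1

lemma bmoNorm_le {f : EuclideanSpace ℝ (Fin n) → ℝ} {C : ℝ} (hC : 0 ≤ C)
    (h : ∀ c l, 0 < l → cubeOsc f c l ≤ C) : bmoNorm f ≤ C :=
  csInf_le ⟨0, fun _ hC' => hC'.1⟩ ⟨hC, h⟩

end

/-- If `φ ∈ BMO(ℝⁿ)` and `|y| < δ`, then `‖φ_y - φ‖_* ≤ C(n) M_{2δ}(φ)`, where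
`M_{2δ}(φ)` is the supremum of mean oscillations of `φ` over cubes of side at most `2δ`.
In particular, if `φ ∈ VMO(ℝⁿ)` then translations act continuously on `φ` in `BMO` norm. -/
theorem translation_bmo_bound (n : ℕ) :
    (∃ C > (0 : ℝ), ∀ (φ : EuclideanSpace ℝ (Fin n) → ℝ) (δ B : ℝ)
        (y : EuclideanSpace ℝ (Fin n)),
        LocallyIntegrable φ → 0 < δ → ‖y‖ < δ →
        (∀ c l, 0 < l → l ≤ 2 * δ → cubeOsc φ c l ≤ B) →
        ∀ c l, 0 < l → cubeOsc (fun x => φ (x - y) - φ x) c l ≤ C * B) ∧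
      ∀ φ : EuclideanSpace ℝ (Fin n) → ℝ, IsVMO φ →
        Tendsto (fun y : EuclideanSpace ℝ (Fin n) => bmoNorm (fun x => φ (x - y) - φ x))
          (nhds 0) (nhds 0) := by
  have hC : (0 : ℝ) < 4 * 3 ^ n := by positivity
  refine ⟨⟨4 * 3 ^ n, hC, fun φ δ B y hφ hδ hy hB c l hl =>
    cubeOsc_comp_sub_sub_le hφ hδ hy hB c hl⟩, fun φ ⟨⟨hφ, _⟩, hvmo⟩ => ?_⟩
  rw [Metric.tendsto_nhds_nhds]
  intro ε hε
  obtain ⟨δ, hδ, hosc⟩ := hvmo (ε / 2 / (4 * 3 ^ n)) (by positivity)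
  refine ⟨δ / 2, by positivity, fun y hy => ?_⟩
  rw [dist_zero_right] at hy
  rw [Real.dist_0_eq_abs, abs_of_nonneg (bmoNorm_nonneg _)]
  refine (bmoNorm_le (by positivity) fun c l hl => ?_).trans_lt (half_lt_self hε)
  calc cubeOsc (fun x => φ (x - y) - φ x) c l ≤ 4 * 3 ^ n * (ε / 2 / (4 * 3 ^ n)) :=
        cubeOsc_comp_sub_sub_le hφ (half_pos hδ) hy
          (fun c l hl hle => hosc c l hl (by linarith)) c hl
    _ = ε / 2 := mul_div_cancel₀ _ hC.ne'
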